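/- arXiv:1805.05253 — 3 statements merged into one kernel-verified Lean document; each statement's English description precedes it below -/
import Mathlib

section
/- Let n ≥ 3 and let p be a probability measure on the symmetric group S_n that is invariant under conjugation. Then for every i ∈ {1,…,n−1}, p({σ : i ∈ D(σ)}) = p({σ : σ(1)=1 and σ(2)≠2}) + p({σ : σ(1)=2 and σ(2)=1}) + p({σ : σ(1)∉{1,2} and σ(2)=1}) + (1/2)·p({σ : σ(1)∉{1,2} and σ(2)∉{1,2}}). -/
noncomputable section

/-- `i ∈ D(σ)` for 1-based `i ∈ {1,…,n−1}`: `σ(i+1) < σ(i)`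
(positions `i`, `i+1` are the 0-based indices `i−1`, `i`). -/
def descentAt {n : ℕ} (σ : Equiv.Perm (Fin n)) (i : ℕ) : Prop :=
  ∃ (h1 : i - 1 < n) (h2 : i < n), σ ⟨i, h2⟩ < σ ⟨i - 1, h1⟩

/-- The probability of the event `P` under the probability mass function `p` on `S_n`. -/
def permProb {n : ℕ} (p : Equiv.Perm (Fin n) → ℝ) (P : Equiv.Perm (Fin n) → Prop) : ℝ :=
  ∑ σ, Set.indicator {σ' | P σ'} p σ

open Finset
open scoped Classical
set_option maxHeartbeats 2000000

lemma permProb_eq {n : ℕ} (p : Equiv.Perm (Fin n) → ℝ) (P : Equiv.Perm (Fin n) → Prop) :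
    permProb p P = ∑ σ, if P σ then p σ else 0 := by
  classical
  unfold permProb
  refine Finset.sum_congr rfl fun σ _ => ?_
  by_cases h : P σ <;> simp [Set.indicator_apply, Set.mem_setOf_eq, h]

lemma permProb_congr {n : ℕ} (p : Equiv.Perm (Fin n) → ℝ) {P Q : Equiv.Perm (Fin n) → Prop}
    (h : ∀ σ, P σ ↔ Q σ) : permProb p P = permProb p Q := by
  simp only [permProb_eq]
  exact Finset.sum_congr rfl fun σ _ => by rw [iff_iff_eq.mp (h σ)]

lemma permProb_zero {n : ℕ} (p : Equiv.Perm (Fin n) → ℝ) {P : Equiv.Perm (Fin n) → Prop}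
    (h : ∀ σ, ¬ P σ) : permProb p P = 0 := by
  simp only [permProb_eq]
  simp [h]

lemma permProb_conj {n : ℕ} (p : Equiv.Perm (Fin n) → ℝ)
    (hinv : ∀ σ ρ : Equiv.Perm (Fin n), p (ρ⁻¹ * σ * ρ) = p σ)
    (ρ : Equiv.Perm (Fin n)) (P : Equiv.Perm (Fin n) → Prop) :
    permProb p P = permProb p (fun σ => P (ρ⁻¹ * σ * ρ)) := by
  simp only [permProb_eq]
  refine Fintype.sum_equiv ((Equiv.mulLeft ρ).trans (Equiv.mulRight ρ⁻¹))
    (fun τ => if P τ then p τ else 0) (fun σ => if P (ρ⁻¹ * σ * ρ) then p σ else 0) fun τ => ?_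
  have h1 : ρ⁻¹ * (ρ * τ * ρ⁻¹) * ρ = τ := by group
  have h2 : p (ρ * τ * ρ⁻¹) = p τ := by
    have := hinv τ ρ⁻¹; simpa using this
  simp [Equiv.mulLeft, Equiv.mulRight, h1, h2]


lemma key_sum {n : ℕ} (a b : Fin n) (hb : (b : ℕ) = (a : ℕ) + 1)
    (q : Fin n → Fin n → ℝ)
    (F1 : ∀ c : Fin n, c ≠ a → c ≠ b → q c b = q a c)
    (F2 : ∀ c : Fin n, c ≠ a → c ≠ b → q b c = q c a)
    (F3 : ∀ c d : Fin n, c ≠ a → c ≠ b → d ≠ a → d ≠ b → q c d = q d c)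
    (F4 : ∀ x, q x x = 0) :
    ∑ x, ∑ y, (if y < x then q x y else 0) =
      (∑ x, ∑ y, if x = a ∧ y ≠ b then q x y else 0)
      + (∑ x, ∑ y, if x = b ∧ y = a then q x y else 0)
      + (∑ x, ∑ y, if (x ≠ a ∧ x ≠ b) ∧ y = a then q x y else 0)
      + (1/2) * (∑ x, ∑ y, if (x ≠ a ∧ x ≠ b) ∧ (y ≠ a ∧ y ≠ b) then q x y else 0) := by
  classical
  have hab : a ≠ b := by
    intro h; rw [h] at hb; omega
  have hba : b ≠ a := hab.symm
  have haltb : a < b := by rw [Fin.lt_def]; omega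
  set S : Finset (Fin n) := Finset.univ \ {a, b} with hS
  have hmem : ∀ c : Fin n, c ∈ S ↔ c ≠ a ∧ c ≠ b := by
    intro c; simp [hS]
  have hsplit : ∀ f : Fin n → ℝ, ∑ x, f x = f a + f b + ∑ x ∈ S, f x := by
    intro f
    have h1 : ({a, b} : Finset (Fin n)) ⊆ univ := subset_univ _
    rw [← Finset.sum_sdiff h1, Finset.sum_pair hab, ← hS]; ring
  -- facts about elements of S
  have hordS : ∀ c ∈ S, ((c < a ∧ ¬ b < c) ∨ (¬ c < a ∧ b < c)) := by
    intro c hc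
    rw [hmem] at hc
    have h1 : (c : ℕ) ≠ (a : ℕ) := fun h => hc.1 (Fin.ext h)
    have h2 : (c : ℕ) ≠ (b : ℕ) := fun h => hc.2 (Fin.ext h)
    rw [Fin.lt_def, Fin.lt_def]
    omega
  -- LHS decomposition
  rw [hsplit (fun x => ∑ y, if y < x then q x y else 0)]
  have hTa : ∑ y, (if y < a then q a y else 0) = ∑ c ∈ S, (if c < a then q a c else 0) := by
    rw [hsplit (fun y => if y < a then q a y else 0)]
    have h1 : ¬ a < a := lt_irrefl a
    have h2 : ¬ b < a := not_lt.mpr (le_of_lt haltb)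
    simp [h1, h2]
  have hTb : ∑ y, (if y < b then q b y else 0)
      = q b a + ∑ c ∈ S, (if c < a then q b c else 0) := by
    rw [hsplit (fun y => if y < b then q b y else 0)]
    have h1 : ¬ b < b := lt_irrefl b
    simp only [haltb, if_pos, h1, if_neg, if_false]
    rw [add_zero]
    congr 1
    refine Finset.sum_congr rfl fun c hc => ?_
    have := hordS c hc
    have hcb : c < b ↔ c < a := by
      rw [hmem] at hc
      have h1 : (c : ℕ) ≠ (a : ℕ) := fun h => hc.1 (Fin.ext h)
      rw [Fin.lt_def, Fin.lt_def]; omega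
    exact if_congr hcb rfl rfl
  have hTS : ∀ x ∈ S, ∑ y, (if y < x then q x y else 0)
      = (if a < x then q x a else 0) + (if b < x then q x b else 0)
        + ∑ y ∈ S, (if y < x then q x y else 0) := by
    intro x hx
    rw [hsplit (fun y => if y < x then q x y else 0)]
  rw [hTa, hTb, Finset.sum_congr rfl hTS]
  rw [Finset.sum_add_distrib, Finset.sum_add_distrib]
  -- identity I1
  have I1 : (∑ c ∈ S, (if c < a then q a c else 0)) + (∑ x ∈ S, (if b < x then q x b else 0))
      = ∑ c ∈ S, q a c := by
    rw [← Finset.sum_add_distrib]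
    refine Finset.sum_congr rfl fun c hc => ?_
    have hc' := (hmem c).mp hc
    rw [F1 c hc'.1 hc'.2]
    rcases hordS c hc with ⟨h1, h2⟩ | ⟨h1, h2⟩ <;> simp [h1, h2]
  -- identity I2
  have I2 : (∑ c ∈ S, (if c < a then q b c else 0)) + (∑ x ∈ S, (if a < x then q x a else 0))
      = ∑ c ∈ S, q c a := by
    rw [← Finset.sum_add_distrib]
    refine Finset.sum_congr rfl fun c hc => ?_
    have hc' := (hmem c).mp hc
    rw [F2 c hc'.1 hc'.2]
    have : c < a ∨ a < c := lt_or_gt_of_ne (fun h => hc'.1 h)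
    rcases this with h | h
    · simp [h, not_lt.mpr (le_of_lt h)]
    · simp [h, not_lt.mpr (le_of_lt h)]
  -- identity I3
  have I3 : 2 * (∑ x ∈ S, ∑ y ∈ S, (if y < x then q x y else 0))
      = ∑ x ∈ S, ∑ y ∈ S, q x y := by
    have hswap : (∑ x ∈ S, ∑ y ∈ S, (if x < y then q x y else 0))
        = ∑ x ∈ S, ∑ y ∈ S, (if y < x then q x y else 0) := by
      have step1 : (∑ x ∈ S, ∑ y ∈ S, (if x < y then q x y else 0))
          = ∑ x ∈ S, ∑ y ∈ S, (if x < y then q y x else 0) := by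
        refine Finset.sum_congr rfl fun x hx => Finset.sum_congr rfl fun y hy => ?_
        have hx' := (hmem x).mp hx
        have hy' := (hmem y).mp hy
        rw [F3 x y hx'.1 hx'.2 hy'.1 hy'.2]
      rw [step1, Finset.sum_comm]
    have hdiag : (∑ x ∈ S, ∑ y ∈ S, (if x = y then q x y else 0)) = 0 := by
      refine Finset.sum_eq_zero fun x hx => ?_
      rw [Finset.sum_ite_eq S x (fun y => q x y)]
      simp [hx, F4]
    have htri : (∑ x ∈ S, ∑ y ∈ S, q x y)
        = (∑ x ∈ S, ∑ y ∈ S, (if y < x then q x y else 0))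
          + ((∑ x ∈ S, ∑ y ∈ S, (if x < y then q x y else 0))
            + (∑ x ∈ S, ∑ y ∈ S, (if x = y then q x y else 0))) := by
      rw [← Finset.sum_add_distrib, ← Finset.sum_add_distrib]
      refine Finset.sum_congr rfl fun x _ => ?_
      rw [← Finset.sum_add_distrib, ← Finset.sum_add_distrib]
      refine Finset.sum_congr rfl fun y _ => ?_
      rcases lt_trichotomy y x with h | h | h
      · simp [h, not_lt.mpr (le_of_lt h), (ne_of_gt h)]
      · simp [h, lt_irrefl]
      · simp [h, not_lt.mpr (le_of_lt h), ne_of_lt h]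
    rw [htri, hswap, hdiag]
    ring
  -- RHS collapses
  have R1 : (∑ x, ∑ y, if x = a ∧ y ≠ b then q x y else 0) = ∑ c ∈ S, q a c := by
    rw [hsplit (fun x => ∑ y, if x = a ∧ y ≠ b then q x y else 0)]
    have e1 : (∑ y, if b = a ∧ y ≠ b then q b y else 0) = 0 := by
      refine Finset.sum_eq_zero fun y _ => by simp [hba]
    have e2 : (∑ x ∈ S, ∑ y, if x = a ∧ y ≠ b then q x y else 0) = 0 := by
      refine Finset.sum_eq_zero fun x hx => Finset.sum_eq_zero fun y _ => ?_
      have hx' := (hmem x).mp hx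
      simp [hx'.1]
    rw [e1, e2, add_zero, add_zero]
    rw [hsplit (fun y => if a = a ∧ y ≠ b then q a y else 0)]
    simp [hab, F4]
    refine Finset.sum_congr rfl fun c hc => ?_
    have hc' := (hmem c).mp hc
    simp [hc'.2]
  have R2 : (∑ x, ∑ y, if x = b ∧ y = a then q x y else 0) = q b a := by
    rw [hsplit (fun x => ∑ y, if x = b ∧ y = a then q x y else 0)]
    have e1 : (∑ y, if a = b ∧ y = a then q a y else 0) = 0 :=
      Finset.sum_eq_zero fun y _ => by simp [hab]
    have e2 : (∑ x ∈ S, ∑ y, if x = b ∧ y = a then q x y else 0) = 0 := by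
      refine Finset.sum_eq_zero fun x hx => Finset.sum_eq_zero fun y _ => ?_
      have hx' := (hmem x).mp hx
      simp [hx'.2]
    rw [e1, e2, zero_add, add_zero]
    rw [hsplit (fun y => if b = b ∧ y = a then q b y else 0)]
    have e3 : (∑ c ∈ S, if b = b ∧ c = a then q b c else 0) = 0 := by
      refine Finset.sum_eq_zero fun c hc => ?_
      have hc' := (hmem c).mp hc
      simp [hc'.1]
    rw [e3, add_zero]
    simp [hba]
  have R3 : (∑ x, ∑ y, if (x ≠ a ∧ x ≠ b) ∧ y = a then q x y else 0) = ∑ c ∈ S, q c a := by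
    rw [hsplit (fun x => ∑ y, if (x ≠ a ∧ x ≠ b) ∧ y = a then q x y else 0)]
    have e1 : (∑ y, if (a ≠ a ∧ a ≠ b) ∧ y = a then q a y else 0) = 0 :=
      Finset.sum_eq_zero fun y _ => by simp
    have e2 : (∑ y, if (b ≠ a ∧ b ≠ b) ∧ y = a then q b y else 0) = 0 :=
      Finset.sum_eq_zero fun y _ => by simp
    rw [e1, e2, zero_add, zero_add]
    refine Finset.sum_congr rfl fun x hx => ?_
    have hx' := (hmem x).mp hx
    rw [hsplit (fun y => if (x ≠ a ∧ x ≠ b) ∧ y = a then q x y else 0)]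
    have e3 : (∑ c ∈ S, if (x ≠ a ∧ x ≠ b) ∧ c = a then q x c else 0) = 0 := by
      refine Finset.sum_eq_zero fun c hc => ?_
      have hc' := (hmem c).mp hc
      simp [hc'.1]
    rw [e3, add_zero]
    simp [hx'.1, hx'.2, hba]
  have R4 : (∑ x, ∑ y, if (x ≠ a ∧ x ≠ b) ∧ (y ≠ a ∧ y ≠ b) then q x y else 0)
      = ∑ x ∈ S, ∑ y ∈ S, q x y := by
    rw [hsplit (fun x => ∑ y, if (x ≠ a ∧ x ≠ b) ∧ (y ≠ a ∧ y ≠ b) then q x y else 0)]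
    have e1 : (∑ y, if (a ≠ a ∧ a ≠ b) ∧ (y ≠ a ∧ y ≠ b) then q a y else 0) = 0 :=
      Finset.sum_eq_zero fun y _ => by simp
    have e2 : (∑ y, if (b ≠ a ∧ b ≠ b) ∧ (y ≠ a ∧ y ≠ b) then q b y else 0) = 0 :=
      Finset.sum_eq_zero fun y _ => by simp
    rw [e1, e2, zero_add, zero_add]
    refine Finset.sum_congr rfl fun x hx => ?_
    have hx' := (hmem x).mp hx
    rw [hsplit (fun y => if (x ≠ a ∧ x ≠ b) ∧ (y ≠ a ∧ y ≠ b) then q x y else 0)]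
    have e3 : (∑ c ∈ S, if (x ≠ a ∧ x ≠ b) ∧ (c ≠ a ∧ c ≠ b) then q x c else 0)
        = ∑ c ∈ S, q x c := by
      refine Finset.sum_congr rfl fun c hc => ?_
      have hc' := (hmem c).mp hc
      simp [hx'.1, hx'.2, hc'.1, hc'.2]
    rw [e3]
    simp [hab]
  rw [R1, R2, R3, R4]
  linarith [I1, I2, I3]

lemma permProb_expand {n : ℕ} (p : Equiv.Perm (Fin n) → ℝ) (a b : Fin n)
    (E : Fin n → Fin n → Prop) :
    permProb p (fun σ => E (σ a) (σ b)) =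
      ∑ x, ∑ y, if E x y then permProb p (fun σ => σ a = x ∧ σ b = y) else 0 := by
  rw [permProb_eq p (fun σ => E (σ a) (σ b))]
  have key : ∀ x y : Fin n,
      (if E x y then permProb p (fun σ => σ a = x ∧ σ b = y) else 0)
      = ∑ σ : Equiv.Perm (Fin n), if E x y ∧ σ a = x ∧ σ b = y then p σ else 0 := by
    intro x y
    by_cases h : E x y
    · rw [if_pos h, permProb_eq]
      refine Finset.sum_congr rfl fun σ _ => ?_
      by_cases hc : σ a = x ∧ σ b = y
      · rw [if_pos hc, if_pos ⟨h, hc⟩]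
      · rw [if_neg hc, if_neg (fun hh => hc hh.2)]
    · rw [if_neg h]
      exact (Finset.sum_eq_zero fun σ _ => if_neg (fun hh => h hh.1)).symm
  simp only [key]
  conv_rhs => enter [2, x]; rw [Finset.sum_comm]
  rw [Finset.sum_comm]
  refine Finset.sum_congr rfl fun σ _ => ?_
  have h1 : ∀ x : Fin n, (∑ y, if E x y ∧ σ a = x ∧ σ b = y then p σ else 0)
      = if σ a = x then (if E x (σ b) then p σ else 0) else 0 := by
    intro x
    by_cases hx : σ a = x
    · rw [if_pos hx]
      have hval : ∀ y, (if E x y ∧ σ a = x ∧ σ b = y then p σ else 0)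
          = if y = σ b then (if E x y then p σ else 0) else 0 := by
        intro y
        by_cases hy : σ b = y
        · subst hy
          by_cases hE : E x (σ b)
          · rw [if_pos ⟨hE, hx, rfl⟩, if_pos rfl, if_pos hE]
          · rw [if_neg (fun h => hE h.1), if_pos rfl, if_neg hE]
        · rw [if_neg (fun h => hy h.2.2), if_neg (fun h => hy h.symm)]
      simp only [hval]
      rw [Finset.sum_ite_eq' Finset.univ (σ b) (fun y => if E x y then p σ else 0)]
      simp
    · rw [if_neg hx]
      refine Finset.sum_eq_zero fun y _ => ?_
      rw [if_neg (fun h => hx h.2.1)]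
  simp only [h1]
  rw [Finset.sum_ite_eq Finset.univ (σ a) (fun x => if E x (σ b) then p σ else 0)]
  simp

theorem stmt_10 (n : ℕ) (hn : 3 ≤ n) (p : Equiv.Perm (Fin n) → ℝ)
    (hpos : ∀ σ, 0 ≤ p σ) (hsum : ∑ σ, p σ = 1)
    (hinv : ∀ σ ρ : Equiv.Perm (Fin n), p (ρ⁻¹ * σ * ρ) = p σ)
    (i : ℕ) (hi1 : 1 ≤ i) (hi2 : i ≤ n - 1) :
    permProb p (fun σ => descentAt σ i) =
        permProb p (fun σ =>
          σ ⟨0, by omega⟩ = ⟨0, by omega⟩ ∧ σ ⟨1, by omega⟩ ≠ ⟨1, by omega⟩)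
      + permProb p (fun σ =>
          σ ⟨0, by omega⟩ = ⟨1, by omega⟩ ∧ σ ⟨1, by omega⟩ = ⟨0, by omega⟩)
      + permProb p (fun σ =>
          σ ⟨0, by omega⟩ ≠ ⟨0, by omega⟩ ∧ σ ⟨0, by omega⟩ ≠ ⟨1, by omega⟩ ∧
          σ ⟨1, by omega⟩ = ⟨0, by omega⟩)
      + (1 / 2) * permProb p (fun σ =>
          σ ⟨0, by omega⟩ ≠ ⟨0, by omega⟩ ∧ σ ⟨0, by omega⟩ ≠ ⟨1, by omega⟩ ∧
          σ ⟨1, by omega⟩ ≠ ⟨0, by omega⟩ ∧ σ ⟨1, by omega⟩ ≠ ⟨1, by omega⟩) := by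
  classical
  haveI : NeZero n := ⟨by omega⟩
  set a : Fin n := ⟨i - 1, by omega⟩ with ha
  set b : Fin n := ⟨i, by omega⟩ with hb
  have hbval : (b : ℕ) = (a : ℕ) + 1 := by simp [ha, hb]; omega
  have hab : a ≠ b := by
    intro h; rw [Fin.ext_iff] at h; simp [ha, hb] at h; omega
  set q : Fin n → Fin n → ℝ
    := fun x y => permProb p (fun σ => σ a = x ∧ σ b = y) with hq
  have qconj : ∀ (ρ : Equiv.Perm (Fin n)) (x y : Fin n),
      q x y = permProb p (fun σ => σ (ρ a) = ρ x ∧ σ (ρ b) = ρ y) := by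
    intro ρ x y
    show permProb p (fun σ => σ a = x ∧ σ b = y) = _
    rw [permProb_conj p hinv ρ (fun σ => σ a = x ∧ σ b = y)]
    refine permProb_congr p fun σ => ?_
    simp only [Equiv.Perm.mul_apply]
    constructor
    · rintro ⟨h1, h2⟩
      constructor
      · rw [← h1]; simp
      · rw [← h2]; simp
    · rintro ⟨h1, h2⟩
      constructor
      · rw [h1]; simp
      · rw [h2]; simp
  have hswapAB : ∀ x y : Fin n, q x y = q (Equiv.swap a b y) (Equiv.swap a b x) := by
    intro x y
    have h := qconj (Equiv.swap a b) x y
    rw [Equiv.swap_apply_left, Equiv.swap_apply_right] at h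
    rw [h]
    exact permProb_congr p fun σ => and_comm
  have F1 : ∀ c : Fin n, c ≠ a → c ≠ b → q c b = q a c := by
    intro c hca hcb
    have h := hswapAB c b
    rwa [Equiv.swap_apply_right, Equiv.swap_apply_of_ne_of_ne hca hcb] at h
  have F2 : ∀ c : Fin n, c ≠ a → c ≠ b → q b c = q c a := by
    intro c hca hcb
    have h := hswapAB b c
    rwa [Equiv.swap_apply_right, Equiv.swap_apply_of_ne_of_ne hca hcb] at h
  have F3 : ∀ c d : Fin n, c ≠ a → c ≠ b → d ≠ a → d ≠ b → q c d = q d c := by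
    intro c d hca hcb hda hdb
    by_cases hcd : c = d
    · rw [hcd]
    · have h := qconj (Equiv.swap c d) c d
      rw [Equiv.swap_apply_left,
        Equiv.swap_apply_of_ne_of_ne (Ne.symm hca) (Ne.symm hda),
        Equiv.swap_apply_of_ne_of_ne (Ne.symm hcb) (Ne.symm hdb),
        Equiv.swap_apply_right] at h
      exact h
  have F4 : ∀ x : Fin n, q x x = 0 := by
    intro x
    refine permProb_zero p fun σ => ?_
    rintro ⟨h1, h2⟩
    exact hab (σ.injective (h1.trans h2.symm))
  -- the permutation sending positions 0,1 to a,b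
  set ρ0 : Equiv.Perm (Fin n) := Equiv.addRight a with hρ0
  have hρ00 : ρ0 (⟨0, by omega⟩ : Fin n) = a := by
    apply Fin.ext
    show ((⟨0, by omega⟩ : Fin n) + a : Fin n).val = (a : ℕ)
    rw [Fin.val_add]
    show (0 + (a:ℕ)) % n = (a:ℕ)
    rw [Nat.zero_add]
    exact Nat.mod_eq_of_lt a.isLt
  have hρ01 : ρ0 (⟨1, by omega⟩ : Fin n) = b := by
    apply Fin.ext
    show ((⟨1, by omega⟩ : Fin n) + a : Fin n).val = (b : ℕ)
    rw [Fin.val_add]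
    show (1 + (a:ℕ)) % n = (b:ℕ)
    have hav : (a:ℕ) = i - 1 := by rw [ha]
    have hbv : (b:ℕ) = i := by rw [hb]
    rw [Nat.mod_eq_of_lt (by omega)]
    omega
  have hiff : ∀ (σ : Equiv.Perm (Fin n)) (z v : Fin n), (ρ0⁻¹ (σ z) = v) ↔ (σ z = ρ0 v) := by
    intro σ z v
    constructor
    · intro h; rw [← h]; simp
    · intro h; rw [h]; simp
  -- event conversions
  have conv1 : permProb p (fun σ : Equiv.Perm (Fin n) =>
        σ ⟨0, by omega⟩ = ⟨0, by omega⟩ ∧ σ ⟨1, by omega⟩ ≠ ⟨1, by omega⟩)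
      = permProb p (fun σ => σ a = a ∧ σ b ≠ b) := by
    rw [permProb_conj p hinv ρ0]
    refine permProb_congr p fun σ => ?_
    simp only [Equiv.Perm.mul_apply, ne_eq, hiff, hρ00, hρ01]
  have conv2 : permProb p (fun σ : Equiv.Perm (Fin n) =>
        σ ⟨0, by omega⟩ = ⟨1, by omega⟩ ∧ σ ⟨1, by omega⟩ = ⟨0, by omega⟩)
      = permProb p (fun σ => σ a = b ∧ σ b = a) := by
    rw [permProb_conj p hinv ρ0]
    refine permProb_congr p fun σ => ?_
    simp only [Equiv.Perm.mul_apply, ne_eq, hiff, hρ00, hρ01]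
  have conv3 : permProb p (fun σ : Equiv.Perm (Fin n) =>
        σ ⟨0, by omega⟩ ≠ ⟨0, by omega⟩ ∧ σ ⟨0, by omega⟩ ≠ ⟨1, by omega⟩ ∧
        σ ⟨1, by omega⟩ = ⟨0, by omega⟩)
      = permProb p (fun σ => σ a ≠ a ∧ σ a ≠ b ∧ σ b = a) := by
    rw [permProb_conj p hinv ρ0]
    refine permProb_congr p fun σ => ?_
    simp only [Equiv.Perm.mul_apply, ne_eq, hiff, hρ00, hρ01]
  have conv4 : permProb p (fun σ : Equiv.Perm (Fin n) =>
        σ ⟨0, by omega⟩ ≠ ⟨0, by omega⟩ ∧ σ ⟨0, by omega⟩ ≠ ⟨1, by omega⟩ ∧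
        σ ⟨1, by omega⟩ ≠ ⟨0, by omega⟩ ∧ σ ⟨1, by omega⟩ ≠ ⟨1, by omega⟩)
      = permProb p (fun σ => σ a ≠ a ∧ σ a ≠ b ∧ σ b ≠ a ∧ σ b ≠ b) := by
    rw [permProb_conj p hinv ρ0]
    refine permProb_congr p fun σ => ?_
    simp only [Equiv.Perm.mul_apply, ne_eq, hiff, hρ00, hρ01]
  -- expansions into q
  have hR1 : permProb p (fun σ => σ a = a ∧ σ b ≠ b)
      = ∑ x, ∑ y, if x = a ∧ y ≠ b then q x y else 0 := by
    refine Eq.trans (permProb_expand p a b (fun x y => x = a ∧ y ≠ b)) ?_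
    refine Finset.sum_congr rfl fun x _ => Finset.sum_congr rfl fun y _ => ?_
    by_cases hc : x = a ∧ y ≠ b
    · rw [if_pos hc, if_pos hc]
    · rw [if_neg hc, if_neg hc]
  have hR2 : permProb p (fun σ => σ a = b ∧ σ b = a)
      = ∑ x, ∑ y, if x = b ∧ y = a then q x y else 0 := by
    refine Eq.trans (permProb_expand p a b (fun x y => x = b ∧ y = a)) ?_
    refine Finset.sum_congr rfl fun x _ => Finset.sum_congr rfl fun y _ => ?_
    by_cases hc : x = b ∧ y = a
    · rw [if_pos hc, if_pos hc]
    · rw [if_neg hc, if_neg hc]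
  have hR3 : permProb p (fun σ => σ a ≠ a ∧ σ a ≠ b ∧ σ b = a)
      = ∑ x, ∑ y, if (x ≠ a ∧ x ≠ b) ∧ y = a then q x y else 0 := by
    refine Eq.trans (permProb_expand p a b (fun x y => x ≠ a ∧ x ≠ b ∧ y = a)) ?_
    refine Finset.sum_congr rfl fun x _ => Finset.sum_congr rfl fun y _ => ?_
    by_cases hc : (x ≠ a ∧ x ≠ b) ∧ y = a
    · rw [if_pos (show x ≠ a ∧ x ≠ b ∧ y = a by tauto), if_pos hc]
    · rw [if_neg (show ¬(x ≠ a ∧ x ≠ b ∧ y = a) by tauto), if_neg hc]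
  have hR4 : permProb p (fun σ => σ a ≠ a ∧ σ a ≠ b ∧ σ b ≠ a ∧ σ b ≠ b)
      = ∑ x, ∑ y, if (x ≠ a ∧ x ≠ b) ∧ (y ≠ a ∧ y ≠ b) then q x y else 0 := by
    refine Eq.trans (permProb_expand p a b (fun x y => x ≠ a ∧ x ≠ b ∧ y ≠ a ∧ y ≠ b)) ?_
    refine Finset.sum_congr rfl fun x _ => Finset.sum_congr rfl fun y _ => ?_
    by_cases hc : (x ≠ a ∧ x ≠ b) ∧ (y ≠ a ∧ y ≠ b)
    · rw [if_pos (show x ≠ a ∧ x ≠ b ∧ y ≠ a ∧ y ≠ b by tauto), if_pos hc]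
    · rw [if_neg (show ¬(x ≠ a ∧ x ≠ b ∧ y ≠ a ∧ y ≠ b) by tauto), if_neg hc]
  -- LHS
  have hL : permProb p (fun σ => descentAt σ i)
      = ∑ x, ∑ y, if y < x then q x y else 0 := by
    have hdesc : ∀ σ : Equiv.Perm (Fin n), descentAt σ i ↔ σ b < σ a := by
      intro σ
      constructor
      · rintro ⟨h1, h2, hlt⟩; exact hlt
      · intro h; exact ⟨by omega, by omega, h⟩
    refine Eq.trans (permProb_congr p hdesc) ?_
    refine Eq.trans (permProb_expand p a b (fun x y => y < x)) ?_
    refine Finset.sum_congr rfl fun x _ => Finset.sum_congr rfl fun y _ => ?_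
    by_cases hc : y < x
    · rw [if_pos hc, if_pos hc]
    · rw [if_neg hc, if_neg hc]
  rw [hL, conv1, conv2, conv3, conv4, hR1, hR2, hR3, hR4]
  exact key_sum a b hbval q F1 F2 F3 F4
end
end

section
/- For each n ≥ 1 let p_n be a probability measure on the symmetric group S_n that is invariant under conjugation, and assume p_n({σ : σ(1)=1}) → 0 as n → ∞. Then for every finite set A of positive integers, lim_{n→∞} p_n({σ : A ⊆ D(σ)}) = det([k_0(j−i)]_{i,j ∈ A}), where k_0 : ℤ → ℚ is defined by k_0(l) = −B_{l+1}/(l+1)! for l ≥ −1 and k_0(l) = 0 for l ≤ −2, with B_m the Bernoulli numbers normalized so that B_0 = 1 and B_1 = −1/2. -/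
/-!
A permutation has descents at all of `c + 1, …, c + r` iff it is decreasing on the (0-based)
positions `c, …, c + r`. Right multiplication by permutations of these positions permutes the
`(r + 1)!` possible relative orders there freely and leaves descents left of `c` alone, so
removing the last maximal run of `A` divides `#{σ ∈ S_N | A ⊆ D(σ)}` by `(r + 1)!`. The kernel
matrix factors the same way: it is block triangular since `k₀(l) = 0` for `l ≤ -2`, and a run
contributes the Toeplitz determinant `1 / (r + 1)!`, by the Bernoulli recursion. Hence
`#{σ ∈ S_N | A ⊆ D(σ)} / N! = det [k₀(j - i)]`.

For the measures let `A ⊆ {1, …, m}` and consider the window of positions `0, …, m`. Conjugating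
by transpositions shows `p_n(σ i = j) ≤ p_n(σ 0 = 0) + 1 / (n - 1)`, so with probability
`1 - O(m²)·o(1)` the permutation maps the window off itself. On that event, conjugating by a
permutation of the window only reorders the values `σ 0, …, σ m`; by invariance their relative
order is uniform, and `A ⊆ D(σ)` has conditional probability `#{τ ∈ S_{m+1} | A ⊆ D(τ)} / (m+1)!`.
-/

noncomputable section

/-- The kernel `k₀(l) = −B_{l+1}/(l+1)!` for `l ≥ −1`, and `0` for `l ≤ −2`, where `B` are
the Bernoulli numbers with `B₀ = 1`, `B₁ = −1/2` (Mathlib's `bernoulli`). -/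
def k0 (l : ℤ) : ℚ :=
  if -1 ≤ l then -(bernoulli (l + 1).toNat) / ((l + 1).toNat.factorial : ℚ) else 0

open Finset Equiv Function

theorem k0_of_le_neg_two {l : ℤ} (hl : l ≤ -2) : k0 l = 0 := by
  rw [k0, if_neg (by omega)]

theorem k0_neg_one : k0 (-1) = -1 := by
  norm_num [k0]

theorem k0_natCast (d : ℕ) : k0 d = -bernoulli (d + 1) / (d + 1).factorial := by
  rw [k0, if_pos (by omega), show ((d : ℤ) + 1).toNat = d + 1 by omega]

-- The coefficient identity behind `(1 - e^z) * ∑ k₀(l) z^l = 1`.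
theorem sum_k0_div_factorial (k : ℕ) :
    ∑ d ∈ range (k + 1), k0 d / (k + 1 - d).factorial = 1 / (k + 2).factorial := by
  have hB := sum_bernoulli (k + 2)
  rw [if_neg (by omega), sum_range_succ'] at hB
  have hterm : ∀ d ∈ range (k + 1), k0 d / (k + 1 - d).factorial
      = -((k + 2).choose (d + 1) * bernoulli (d + 1)) / (k + 2).factorial := by
    intro d hd
    rw [k0_natCast, Nat.cast_choose ℚ (by simp at hd; omega),
      show k + 2 - (d + 1) = k + 1 - d by omega]
    field_simp
  rw [sum_congr rfl hterm, ← sum_div, sum_neg_distrib]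
  simp only [Nat.choose_zero_right, Nat.cast_one, bernoulli_zero, mul_one] at hB
  rw [show ∑ d ∈ range (k + 1), ((k + 2).choose (d + 1) : ℚ) * bernoulli (d + 1) = -1 by
    linarith]
  norm_num

def k0Toeplitz (r : ℕ) : Matrix (Fin r) (Fin r) ℚ :=
  Matrix.of fun i j => k0 ((j : ℤ) - i)

-- Shifting the first row makes the expansion along the first column close up: both nonzero
-- minors are again of this shape.
def k0ToeplitzShifted (k : ℕ) (t : ℤ) : Matrix (Fin (k + 1)) (Fin (k + 1)) ℚ :=
  Matrix.of fun i j => k0 ((j : ℤ) - i + if i = 0 then t else 0)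

theorem det_k0ToeplitzShifted_succ (k : ℕ) (t : ℤ) :
    (k0ToeplitzShifted (k + 1) t).det
      = k0 t * (k0ToeplitzShifted k 0).det + (k0ToeplitzShifted k (t + 1)).det := by
  have hminor₀ : (k0ToeplitzShifted (k + 1) t).submatrix Fin.succ Fin.succ
      = k0ToeplitzShifted k 0 := by
    ext i j
    simp [k0ToeplitzShifted]
  have hminor₁ : (k0ToeplitzShifted (k + 1) t).submatrix (Fin.succ 0).succAbove Fin.succ
      = k0ToeplitzShifted k (t + 1) := by
    ext i j
    cases i using Fin.cases with
    | zero => simp [k0ToeplitzShifted]; ring_nf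
    | succ i => simp [k0ToeplitzShifted]
  rw [Matrix.det_succ_column_zero, Fin.sum_univ_succ, Fin.sum_univ_succ,
    Finset.sum_eq_zero fun i _ => ?_]
  · rw [Fin.succAbove_zero, hminor₀, hminor₁]
    simp [k0ToeplitzShifted, k0_neg_one]
  · rw [k0ToeplitzShifted, Matrix.of_apply, k0_of_le_neg_two, mul_zero, zero_mul]
    simp

theorem det_k0ToeplitzShifted (k : ℕ) (t : ℤ) :
    (k0ToeplitzShifted k t).det = ∑ d ∈ range (k + 1), k0 (t + d) / (k + 1 - d).factorial := by
  induction k generalizing t with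
  | zero => simp [k0ToeplitzShifted]
  | succ k ih =>
    rw [det_k0ToeplitzShifted_succ, ih, ih, sum_range_succ' _ (k + 1)]
    simp only [zero_add, sum_k0_div_factorial, Nat.add_sub_add_right, Nat.cast_add,
      Nat.cast_one, Nat.cast_zero, add_zero, Nat.sub_zero, add_right_comm t 1, ← add_assoc]
    ring

theorem det_k0Toeplitz (r : ℕ) : (k0Toeplitz r).det = 1 / (r + 1).factorial := by
  cases r with
  | zero => simp [k0Toeplitz]
  | succ k =>
    have hshift : k0Toeplitz (k + 1) = k0ToeplitzShifted k 0 := by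
      ext
      simp [k0Toeplitz, k0ToeplitzShifted]
    rw [hshift, det_k0ToeplitzShifted]
    simpa using sum_k0_div_factorial k

def kernelMatrix (A : Finset ℕ) : Matrix A A ℚ :=
  Matrix.of fun i j => k0 (((j : ℕ) : ℤ) - ((i : ℕ) : ℤ))

theorem det_kernelMatrix_Icc (c r : ℕ) :
    (kernelMatrix (Icc (c + 1) (c + r))).det = 1 / (r + 1).factorial := by
  let e : Fin r ≃ Icc (c + 1) (c + r) :=
    { toFun := fun y => ⟨c + 1 + y, by simp; omega⟩
      invFun := fun x => ⟨x - (c + 1), by have := mem_Icc.1 x.2; omega⟩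
      left_inv := fun y => by ext; simp
      right_inv := fun x => by ext; have := mem_Icc.1 x.2; simp; omega }
  rw [← det_k0Toeplitz, ← Matrix.det_submatrix_equiv_self e]
  congr 1
  ext i j
  simp [kernelMatrix, k0Toeplitz, e]

theorem det_kernelMatrix_union {B R : Finset ℕ} (hBR : ∀ b ∈ B, ∀ a ∈ R, b + 2 ≤ a) :
    (kernelMatrix (B ∪ R)).det = (kernelMatrix B).det * (kernelMatrix R).det := by
  have hdisj : Disjoint B R :=
    disjoint_left.2 fun b hb hbR => by have := hBR b hb b hbR; omega
  rw [← Matrix.det_submatrix_equiv_self (Equiv.Finset.union B R hdisj)]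
  convert Matrix.det_fromBlocks_zero₂₁ (kernelMatrix B)
    (Matrix.of fun (i : B) (j : R) => k0 (((j : ℕ) : ℤ) - ((i : ℕ) : ℤ))) (kernelMatrix R)
  ext (i | i) (j | j)
  · rfl
  · rfl
  · have := hBR j j.2 i i.2
    exact k0_of_le_neg_two (by simp only [Equiv.Finset.union_inl, Equiv.Finset.union_inr]; omega)
  · rfl

def patternPerm {α : Type*} [LinearOrder α] {k : ℕ} (f : Fin k → α) : Perm (Fin k) :=
  (Tuple.sort f)⁻¹

section Pattern

variable {α : Type*} [LinearOrder α] {k : ℕ} {f : Fin k → α}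

theorem patternPerm_lt_patternPerm_iff (hf : Injective f) {i j : Fin k} :
    patternPerm f i < patternPerm f j ↔ f i < f j := by
  have hsorted : StrictMono (f ∘ Tuple.sort f) :=
    (Tuple.monotone_sort f).strictMono_of_injective (hf.comp (Tuple.sort f).injective)
  conv_rhs => rw [← (Tuple.sort f).apply_symm_apply i, ← (Tuple.sort f).apply_symm_apply j]
  exact hsorted.lt_iff_lt.symm

theorem patternPerm_comp_perm (hf : Injective f) (π : Perm (Fin k)) :
    patternPerm (f ∘ π) = patternPerm f * π := by
  have hsort : π * Tuple.sort (f ∘ π) = Tuple.sort f :=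
    Equiv.ext fun x => hf (congrFun (Tuple.comp_perm_comp_sort_eq_comp_sort (σ := π)) x)
  rw [patternPerm, patternPerm, ← hsort, mul_inv_rev, inv_mul_cancel_right]

end Pattern

theorem Equiv.Perm.strictAnti_iff_eq_revPerm {n : ℕ} (τ : Perm (Fin n)) :
    StrictAnti τ ↔ τ = Fin.revPerm := by
  refine ⟨fun h => ?_, fun h => h ▸ Fin.rev_strictAnti⟩
  have hmono : Monotone ((τ * Fin.revPerm : Perm (Fin n)) : Fin n → Fin n) :=
    (h.comp Fin.rev_strictAnti).monotone
  rw [Perm.monotone_iff, mul_eq_one_iff_eq_inv] at hmono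
  rwa [Perm.inv_def, Fin.revPerm_symm] at hmono

def window (c : ℕ) {r N : ℕ} (h : c + r < N) : Fin (r + 1) ↪ Fin N :=
  ⟨fun y => ⟨c + y, by omega⟩, fun y z hyz => by simpa [Fin.ext_iff] using hyz⟩

@[simp]
theorem window_apply_val {c r N : ℕ} (h : c + r < N) (y : Fin (r + 1)) :
    (window c h y : ℕ) = c + y := rfl

theorem descentAt_iff {n : ℕ} {σ : Perm (Fin n)} {a : ℕ} (ha : a < n) :
    descentAt σ a ↔ σ ⟨a, ha⟩ < σ ⟨a - 1, by omega⟩ :=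
  ⟨fun ⟨_, _, h⟩ => h, fun h => ⟨_, ha, h⟩⟩

theorem descentAt_iff_descentAt_patternPerm {c r N : ℕ} (h : c + r < N) (σ : Perm (Fin N))
    {a : ℕ} (ha₁ : c < a) (ha₂ : a ≤ c + r) :
    descentAt σ a ↔ descentAt (patternPerm (σ ∘ window c h)) (a - c) := by
  rw [descentAt_iff (by omega), descentAt_iff (by omega),
    patternPerm_lt_patternPerm_iff (σ.injective.comp (window c h).injective)]
  simp only [comp_apply]
  congr! 2 <;> ext <;> simp <;> omega

theorem forall_descentAt_Icc_iff {r : ℕ} (τ : Perm (Fin (r + 1))) :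
    (∀ a ∈ Icc 1 r, descentAt τ a) ↔ τ = Fin.revPerm := by
  rw [← τ.strictAnti_iff_eq_revPerm, Fin.strictAnti_iff_succ_lt]
  constructor
  · intro h i
    have hi := h (i + 1) (by simp)
    rw [descentAt_iff (by omega)] at hi
    exact hi
  · intro h a ha
    obtain ⟨h₁, h₂⟩ := mem_Icc.1 ha
    rw [descentAt_iff (by omega)]
    have ha : (⟨a, by omega⟩ : Fin (r + 1)) = Fin.succ ⟨a - 1, by omega⟩ :=
      Fin.ext (by simp; omega)
    rw [ha]
    exact h _

theorem forall_descentAt_Icc_iff_patternPerm_window {c r N : ℕ} (h : c + r < N)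
    (σ : Perm (Fin N)) :
    (∀ a ∈ Icc (c + 1) (c + r), descentAt σ a) ↔
      patternPerm (σ ∘ window c h) = Fin.revPerm := by
  rw [← forall_descentAt_Icc_iff]
  constructor
  · intro hσ a ha
    obtain ⟨h₁, h₂⟩ := mem_Icc.1 ha
    simpa using (descentAt_iff_descentAt_patternPerm h σ (a := a + c) (by omega) (by omega)).1
      (hσ _ (mem_Icc.2 ⟨by omega, by omega⟩))
  · intro hσ a ha
    obtain ⟨h₁, h₂⟩ := mem_Icc.1 ha
    exact (descentAt_iff_descentAt_patternPerm h σ (by omega) h₂).2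
      (hσ _ (mem_Icc.2 ⟨by omega, by omega⟩))

theorem descentAt_mul_iff_of_lt {N c a : ℕ} {σ ρ : Perm (Fin N)}
    (hρ : ∀ x : Fin N, (x : ℕ) < c → ρ x = x) (ha : a < c) :
    descentAt (σ * ρ) a ↔ descentAt σ a := by
  refine exists_congr fun _ => exists_congr fun _ => ?_
  rw [Perm.mul_apply, Perm.mul_apply, hρ _ ha, hρ _ (by simp; omega)]

theorem sum_filter_mem_eq_card_nsmul {X G M : Type*} [Group G] [DecidableEq G]
    [AddCommMonoid M] {E : Finset X} {pat : X → G} {w : X → M} (T : G → X ≃ X)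
    (hE : ∀ g x, T g x ∈ E ↔ x ∈ E) (hpat : ∀ g, ∀ x ∈ E, pat (T g x) = pat x * g)
    (hw : ∀ g x, w (T g x) = w x) (B : Finset G) :
    ∑ x ∈ E with pat x ∈ B, w x = #B • ∑ x ∈ E with pat x = 1, w x := by
  have hfiber : ∀ τ, ∑ x ∈ E with pat x = τ, w x = ∑ x ∈ E with pat x = 1, w x := by
    intro τ
    refine sum_equiv (T τ⁻¹) (fun x => ?_) (fun x _ => (hw _ x).symm)
    simp only [mem_filter, hE]
    refine and_congr_right fun hx => ?_
    rw [hpat _ x hx, mul_inv_eq_one]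
  rw [← sum_fiberwise_of_maps_to (t := B) (g := pat) fun x hx => (mem_filter.1 hx).2,
    ← sum_const]
  refine sum_congr rfl fun τ hτ => ?_
  rw [← hfiber τ]
  congr 1
  ext x
  simp only [mem_filter]
  constructor
  · exact fun ⟨⟨hx, _⟩, h⟩ => ⟨hx, h⟩
  · rintro ⟨hx, rfl⟩
    exact ⟨⟨hx, hτ⟩, rfl⟩

section DescentCount

open scoped Classical

def descentCount (N : ℕ) (A : Finset ℕ) : ℕ :=
  #{σ : Perm (Fin N) | ∀ a ∈ A, descentAt σ a}

theorem descentCount_union_Icc_mul {N c r : ℕ} {B : Finset ℕ} (hB : ∀ b ∈ B, b < c)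
    (h : c + r < N) :
    descentCount N (B ∪ Icc (c + 1) (c + r)) * (r + 1).factorial = descentCount N B := by
  have hfix : ∀ (π : Perm (Fin (r + 1))) (x : Fin N), (x : ℕ) < c →
      π.viaFintypeEmbedding (window c h) x = x := fun π x hx =>
    Perm.viaFintypeEmbedding_apply_notMem_range _ _ fun ⟨y, hy⟩ => by
      have : c + (y : ℕ) = x := congrArg Fin.val hy
      omega
  have key := sum_filter_mem_eq_card_nsmul (E := {σ : Perm (Fin N) | ∀ b ∈ B, descentAt σ b})
    (pat := fun σ => patternPerm (σ ∘ window c h)) (w := fun _ => 1)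
    (fun π => Equiv.mulRight (π.viaFintypeEmbedding (window c h)))
    (fun π σ => by
      simp only [mem_filter, mem_univ, true_and, coe_mulRight]
      exact forall₂_congr fun b hb => descentAt_mul_iff_of_lt (hfix π) (hB b hb))
    (fun π σ _ => by
      rw [← patternPerm_comp_perm (σ.injective.comp (window c h).injective)]
      congr 1
      ext y
      simp [Perm.viaFintypeEmbedding_apply_image])
    (fun _ _ => rfl)
  have hunion : descentCount N (B ∪ Icc (c + 1) (c + r))
      = #{σ : Perm (Fin N) |
          (∀ b ∈ B, descentAt σ b) ∧ patternPerm (σ ∘ window c h) = Fin.revPerm} := by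
    rw [descentCount]
    congr 1
    ext σ
    simp only [mem_filter, mem_univ, true_and, mem_union, or_imp, forall_and,
      forall_descentAt_Icc_iff_patternPerm_window h]
  have h1 := key {Fin.revPerm}
  have h2 := key univ
  simp only [mem_singleton, mem_univ, filter_filter, and_true, card_singleton,
    card_univ, Fintype.card_perm, Fintype.card_fin, smul_eq_mul, ← card_eq_sum_ones] at h1 h2
  rw [hunion, h1, descentCount, h2]
  ring

theorem descentCount_eq_factorial_mul_det {N : ℕ} (A : Finset ℕ)
    (hA : ∀ a ∈ A, 1 ≤ a ∧ a < N) :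
    (descentCount N A : ℚ) = N.factorial * (kernelMatrix A).det := by
  induction A using Finset.strongInduction with
  | H A ih =>
  rcases A.eq_empty_or_nonempty with rfl | hne
  · simp [descentCount, Fintype.card_perm, Matrix.det_isEmpty]
  -- Split off the last maximal run `c + 1, …, m` of `A`.
  obtain ⟨m, hmA, hmax⟩ : ∃ m ∈ A, ∀ x ∈ A, x ≤ m :=
    ⟨A.max' hne, A.max'_mem hne, fun x hx => A.le_max' x hx⟩
  obtain ⟨c, hc, hcm, hrun⟩ : ∃ c ∉ A, c < m ∧ ∀ x, c < x → x ≤ m → x ∈ A := by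
    have hc := Nat.findGreatest_spec (P := (· ∉ A)) (Nat.zero_le m)
      fun h0 => by have := hA 0 h0; omega
    refine ⟨_, hc, lt_of_le_of_ne (Nat.findGreatest_le m) fun h => hc (by rwa [h]), ?_⟩
    exact fun x h₁ h₂ => not_not.1 (Nat.findGreatest_is_greatest h₁ h₂)
  obtain ⟨r, rfl⟩ := Nat.exists_eq_add_of_le hcm.le
  set B := A.filter (· < c)
  have hBc : ∀ b ∈ B, b < c := fun b hb => (mem_filter.1 hb).2
  have hAB : A = B ∪ Icc (c + 1) (c + r) := by
    ext x
    simp only [B, mem_union, mem_filter, mem_Icc]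
    constructor
    · intro hx
      by_cases hxc : x < c
      · exact Or.inl ⟨hx, hxc⟩
      · have hxc' : x ≠ c := fun h => hc (h ▸ hx)
        exact Or.inr ⟨by omega, hmax x hx⟩
    · rintro (⟨hx, -⟩ | ⟨h₁, h₂⟩)
      · exact hx
      · exact hrun x h₁ h₂
  have hcount := descentCount_union_Icc_mul (N := N) (r := r) hBc (by have := hA _ hmA; omega)
  have hdet := det_kernelMatrix_union (B := B) (R := Icc (c + 1) (c + r))
    fun b hb a ha => by have := hBc b hb; have := (mem_Icc.1 ha).1; omega
  rw [← hAB] at hcount hdet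
  have ihB := ih B (filter_ssubset.2 ⟨_, hmA, by omega⟩) fun b hb => hA b (mem_filter.1 hb).1
  rw [← hcount, Nat.cast_mul] at ihB
  rw [hdet, det_kernelMatrix_Icc]
  field_simp
  linear_combination ihB

end DescentCount

section ConjInvariant

variable {α : Type*} [Fintype α] [DecidableEq α] {q : Perm α → ℝ}

theorem sum_filter_conj (hq : ∀ σ ρ, q (ρ⁻¹ * σ * ρ) = q σ) (ρ : Perm α)
    (P : Perm α → Prop) [DecidablePred P] :
    ∑ σ with P (ρ⁻¹ * σ * ρ), q σ = ∑ σ with P σ, q σ :=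
  sum_equiv (MulAut.conj ρ⁻¹).toEquiv (by simp) fun σ _ => by simpa using (hq σ ρ).symm

theorem sum_apply_eq_self_eq (hq : ∀ σ ρ, q (ρ⁻¹ * σ * ρ) = q σ) (i j : α) :
    ∑ σ with σ i = i, q σ = ∑ σ with σ j = j, q σ := by
  rw [← sum_filter_conj hq (swap i j)]
  simp [swap_apply_eq_iff]

theorem sum_apply_eq_eq_of_ne (hq : ∀ σ ρ, q (ρ⁻¹ * σ * ρ) = q σ) {i j j' : α} (hj : j ≠ i)
    (hj' : j' ≠ i) : ∑ σ with σ i = j, q σ = ∑ σ with σ i = j', q σ := by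
  rw [← sum_filter_conj hq (swap j j')]
  simp [swap_apply_eq_iff, swap_apply_of_ne_of_ne hj.symm hj'.symm]

theorem sum_apply_eq_le_of_ne (hq0 : ∀ σ, 0 ≤ q σ) (hq1 : ∑ σ, q σ = 1)
    (hq : ∀ σ ρ, q (ρ⁻¹ * σ * ρ) = q σ) {i j : α} (hij : j ≠ i) :
    ∑ σ with σ i = j, q σ ≤ 1 / (Fintype.card α - 1) := by
  have hcard : (1 : ℝ) < Fintype.card α := by
    exact_mod_cast Fintype.one_lt_card_iff.2 ⟨i, j, hij.symm⟩
  have hsum : ∑ j' ∈ univ.erase i, ∑ σ with σ i = j', q σ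
      = (Fintype.card α - 1 : ℝ) * ∑ σ with σ i = j, q σ := by
    rw [sum_congr rfl fun j' hj' => sum_apply_eq_eq_of_ne hq (ne_of_mem_erase hj') hij,
      sum_const, card_erase_of_mem (mem_univ i), card_univ, nsmul_eq_mul,
      Nat.cast_sub (by exact_mod_cast hcard.le), Nat.cast_one]
  have hle : ∑ j' ∈ univ.erase i, ∑ σ with σ i = j', q σ ≤ 1 := by
    rw [← hq1, ← sum_fiberwise univ (fun σ => σ i) q]
    exact sum_le_sum_of_subset_of_nonneg (erase_subset i univ) fun j' _ _ =>
      sum_nonneg fun σ _ => hq0 σ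
  rw [le_div_iff₀ (by linarith), mul_comm, ← hsum]
  exact hle

theorem sum_apply_eq_le (hq0 : ∀ σ, 0 ≤ q σ) (hq1 : ∑ σ, q σ = 1)
    (hq : ∀ σ ρ, q (ρ⁻¹ * σ * ρ) = q σ) (i j i₀ : α) :
    ∑ σ with σ i = j, q σ ≤ ∑ σ with σ i₀ = i₀, q σ + 1 / (Fintype.card α - 1) := by
  have hcard : (1 : ℝ) ≤ Fintype.card α := by exact_mod_cast Fintype.card_pos_iff.2 ⟨i⟩
  rcases eq_or_ne j i with rfl | hij
  · rw [sum_apply_eq_self_eq hq j i₀, le_add_iff_nonneg_right]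
    exact div_nonneg zero_le_one (by linarith)
  · exact (sum_apply_eq_le_of_ne hq0 hq1 hq hij).trans
      (le_add_of_nonneg_left (sum_nonneg fun σ _ => hq0 σ))

open scoped Classical in
theorem sum_not_mapsTo_compl_le (hq0 : ∀ σ, 0 ≤ q σ) (hq1 : ∑ σ, q σ = 1)
    (hq : ∀ σ ρ, q (ρ⁻¹ * σ * ρ) = q σ) {ι : Type*} [Fintype ι] (g : ι ↪ α) (i₀ : α) :
    ∑ σ with ¬Set.MapsTo (σ : Perm α) (Set.range g) (Set.range g)ᶜ, q σ
      ≤ Fintype.card ι ^ 2 * (∑ σ with σ i₀ = i₀, q σ + 1 / (Fintype.card α - 1)) := by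
  calc ∑ σ with ¬Set.MapsTo (σ : Perm α) (Set.range g) (Set.range g)ᶜ, q σ
      ≤ ∑ σ, ∑ xy : ι × ι, if σ (g xy.1) = g xy.2 then q σ else 0 := by
        rw [sum_filter]
        refine sum_le_sum fun σ _ => ?_
        have hterm : ∀ xy : ι × ι, 0 ≤ if σ (g xy.1) = g xy.2 then q σ else 0 := fun _ => by
          split_ifs
          exacts [hq0 σ, le_rfl]
        split_ifs with hσ
        · exact sum_nonneg fun xy _ => hterm xy
        · simp only [Set.MapsTo, Set.forall_mem_range, Set.mem_compl_iff, not_forall,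
            not_not] at hσ
          obtain ⟨x, y, hxy⟩ := hσ
          refine le_of_eq_of_le ?_ (single_le_sum (fun xy _ => hterm xy) (mem_univ (x, y)))
          simp [hxy]
    _ = ∑ xy : ι × ι, ∑ σ with σ (g xy.1) = g xy.2, q σ := by
        rw [sum_comm]
        simp_rw [sum_filter]
    _ ≤ ∑ _xy : ι × ι, (∑ σ with σ i₀ = i₀, q σ + 1 / (Fintype.card α - 1)) :=
        sum_le_sum fun xy _ => sum_apply_eq_le hq0 hq1 hq _ _ i₀
    _ = _ := by simp; ring

end ConjInvariant

section ConjViaEmbedding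

variable {ι α : Type*} [Fintype ι] [DecidableEq α] (g : ι ↪ α) (π : Perm ι)

theorem viaFintypeEmbedding_apply_mem_range_iff {x : α} :
    π.viaFintypeEmbedding g x ∈ Set.range g ↔ x ∈ Set.range g := by
  by_cases hx : x ∈ Set.range g
  · obtain ⟨y, rfl⟩ := hx
    simp [Perm.viaFintypeEmbedding_apply_image]
  · rw [Perm.viaFintypeEmbedding_apply_notMem_range _ _ hx]

theorem conj_viaFintypeEmbedding_apply {σ : Perm α}
    (hσ : Set.MapsTo σ (Set.range g) (Set.range g)ᶜ) (y : ι) :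
    ((π.viaFintypeEmbedding g)⁻¹ * σ * π.viaFintypeEmbedding g) (g y) = σ (g (π y)) := by
  rw [Perm.mul_apply, Perm.mul_apply, Perm.viaFintypeEmbedding_apply_image, Perm.inv_eq_iff_eq,
    Perm.viaFintypeEmbedding_apply_notMem_range _ _ (hσ ⟨π y, rfl⟩)]

theorem mapsTo_compl_conj_viaFintypeEmbedding_iff {σ : Perm α} :
    Set.MapsTo ((π.viaFintypeEmbedding g)⁻¹ * σ * π.viaFintypeEmbedding g)
      (Set.range g) (Set.range g)ᶜ ↔ Set.MapsTo σ (Set.range g) (Set.range g)ᶜ := by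
  have hinv : ∀ x, (π.viaFintypeEmbedding g)⁻¹ x ∈ Set.range g ↔ x ∈ Set.range g := fun x => by
    rw [← viaFintypeEmbedding_apply_mem_range_iff g π]
    simp
  simp only [Set.MapsTo, Set.forall_mem_range, Set.mem_compl_iff, Perm.mul_apply,
    Perm.viaFintypeEmbedding_apply_image, hinv]
  exact (π.surjective.forall (p := fun y => σ (g y) ∉ Set.range g)).symm

end ConjViaEmbedding

theorem abs_sum_filter_sub_le {X : Type*} [Fintype X] {q : X → ℝ} (hq0 : ∀ x, 0 ≤ q x)
    (hq1 : ∑ x, q x = 1) (E G : X → Prop) [DecidablePred E] [DecidablePred G] {u : ℝ}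
    (hu0 : 0 ≤ u) (hu1 : u ≤ 1) (hEG : ∑ x with E x ∧ G x, q x = u * ∑ x with G x, q x) :
    |∑ x with E x, q x - u| ≤ ∑ x with ¬G x, q x := by
  have hG : ∑ x with G x, q x = 1 - ∑ x with ¬G x, q x := by
    rw [← hq1, ← sum_filter_add_sum_filter_not univ G]
    ring
  have hE : ∑ x with E x, q x = ∑ x with E x ∧ G x, q x + ∑ x with E x ∧ ¬G x, q x := by
    rw [← sum_filter_add_sum_filter_not _ G, filter_filter, filter_filter]
  have hbad : ∑ x with E x ∧ ¬G x, q x ≤ ∑ x with ¬G x, q x :=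
    sum_le_sum_of_subset_of_nonneg (fun x => by simp only [mem_filter]; tauto) fun x _ _ => hq0 x
  have hbad₀ : 0 ≤ ∑ x with E x ∧ ¬G x, q x := sum_nonneg fun x _ => hq0 x
  rw [abs_le, hE, hEG, hG]
  constructor <;> nlinarith

section DescentProbability

open scoped Classical

/- On permutations mapping the window off itself, conjugation by a permutation `π` of the window
positions only reorders the window values: it preserves `q` and turns the pattern `τ` into
`τ * π`. -/
theorem factorial_mul_sum_descents_and_mapsTo {n m : ℕ} (h : 0 + m < n)
    {q : Perm (Fin n) → ℝ} (hq : ∀ σ ρ, q (ρ⁻¹ * σ * ρ) = q σ) {A : Finset ℕ}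
    (hA : ∀ a ∈ A, 1 ≤ a ∧ a ≤ m) :
    (m + 1).factorial * ∑ σ with (∀ a ∈ A, descentAt σ a) ∧
        Set.MapsTo (σ : Perm (Fin n)) (Set.range (window 0 h)) (Set.range (window 0 h))ᶜ, q σ
      = descentCount (m + 1) A * ∑ σ with
        Set.MapsTo (σ : Perm (Fin n)) (Set.range (window 0 h)) (Set.range (window 0 h))ᶜ, q σ := by
  set g := window 0 h
  have key := sum_filter_mem_eq_card_nsmul
    (E := {σ : Perm (Fin n) | Set.MapsTo σ (Set.range g) (Set.range g)ᶜ})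
    (pat := fun σ => patternPerm (σ ∘ g)) (w := q)
    (fun π => (MulAut.conj (π.viaFintypeEmbedding g)⁻¹).toEquiv)
    (fun π σ => by simpa using mapsTo_compl_conj_viaFintypeEmbedding_iff g π)
    (fun π σ hσ => by
      rw [← patternPerm_comp_perm (σ.injective.comp g.injective)]
      congr 1
      funext y
      simp only [MulEquiv.toEquiv_eq_coe, MulEquiv.coe_toEquiv, MulAut.conj_apply, inv_inv,
        comp_apply]
      exact conj_viaFintypeEmbedding_apply g π (mem_filter.1 hσ).2 y)
    (fun π σ => by simpa using hq σ _)
  have hdesc : ∀ σ : Perm (Fin n),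
      (∀ a ∈ A, descentAt σ a) ↔ ∀ a ∈ A, descentAt (patternPerm (σ ∘ g)) a :=
    fun σ => forall₂_congr fun a ha => by
      simpa using descentAt_iff_descentAt_patternPerm h σ (hA a ha).1 (by simpa using (hA a ha).2)
  have h1 := key {τ | ∀ a ∈ A, descentAt τ a}
  have h2 := key univ
  simp only [mem_filter, mem_univ, true_and, card_univ, Fintype.card_perm,
    Fintype.card_fin, nsmul_eq_mul, filter_filter, and_true] at h1 h2
  simp_rw [hdesc, and_comm (a := ∀ a ∈ A, _), h1, h2, descentCount]
  ring

theorem permProb_eq_sum_filter {n : ℕ} (q : Perm (Fin n) → ℝ) (P : Perm (Fin n) → Prop)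
    [DecidablePred P] :
    permProb q P = ∑ σ with P σ, q σ := by
  rw [permProb, sum_filter]
  simp [Set.indicator_apply]

theorem abs_permProb_descents_sub_le {n m : ℕ} (hmn : m + 1 < n) {q : Perm (Fin n) → ℝ}
    (hq0 : ∀ σ, 0 ≤ q σ) (hq1 : ∑ σ, q σ = 1) (hq : ∀ σ ρ, q (ρ⁻¹ * σ * ρ) = q σ)
    {A : Finset ℕ} (hA : ∀ a ∈ A, 1 ≤ a ∧ a ≤ m) :
    |permProb q (fun σ => ∀ a ∈ A, descentAt σ a)
        - descentCount (m + 1) A / (m + 1).factorial|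
      ≤ (m + 1) ^ 2 * (permProb q (fun σ => ∀ h : 0 < n, σ ⟨0, h⟩ = ⟨0, h⟩) + 1 / (n - 1)) := by
  have h : 0 + m < n := by omega
  have hn : 0 < n := by omega
  have hfact : (0 : ℝ) < (m + 1).factorial := by positivity
  have hcount : (descentCount (m + 1) A : ℝ) ≤ (m + 1).factorial := by
    rw [descentCount]
    exact_mod_cast (card_filter_le _ _).trans (by simp [Fintype.card_perm])
  rw [permProb_eq_sum_filter]
  refine (abs_sum_filter_sub_le hq0 hq1 (fun σ => ∀ a ∈ A, descentAt σ a)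
    (fun σ => Set.MapsTo σ (Set.range (window 0 h)) (Set.range (window 0 h))ᶜ) (by positivity)
    ((div_le_one hfact).2 hcount) ?_).trans ?_
  · rw [div_mul_eq_mul_div, eq_div_iff hfact.ne', mul_comm,
      factorial_mul_sum_descents_and_mapsTo h hq hA]
  · refine (sum_not_mapsTo_compl_le hq0 hq1 hq (window 0 h) ⟨0, hn⟩).trans_eq ?_
    simp [permProb_eq_sum_filter, hn]

end DescentProbability

theorem stmt_15 (p : (n : ℕ) → Equiv.Perm (Fin n) → ℝ)
    (hpos : ∀ n, 1 ≤ n → ∀ σ, 0 ≤ p n σ)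
    (hsum : ∀ n, 1 ≤ n → ∑ σ, p n σ = 1)
    (hinv : ∀ n, 1 ≤ n → ∀ σ ρ : Equiv.Perm (Fin n), p n (ρ⁻¹ * σ * ρ) = p n σ)
    (hfix : Filter.Tendsto
      (fun n => permProb (p n) (fun σ => ∀ h : 0 < n, σ ⟨0, h⟩ = ⟨0, h⟩))
      Filter.atTop (nhds 0)) :
    ∀ A : Finset ℕ, (∀ a ∈ A, 1 ≤ a) →
      Filter.Tendsto (fun n => permProb (p n) (fun σ => ∀ a ∈ A, descentAt σ a))
        Filter.atTop
        (nhds ((Matrix.det (Matrix.of fun i j : A =>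
          k0 (((j : ℕ) : ℤ) - ((i : ℕ) : ℤ))) : ℚ) : ℝ)) := by
  intro A hA
  obtain ⟨m, hm⟩ : ∃ m, ∀ a ∈ A, a ≤ m := ⟨A.sup id, fun a ha => le_sup (f := id) ha⟩
  have hdet : ((kernelMatrix A).det : ℝ) = descentCount (m + 1) A / (m + 1).factorial := by
    have h := descentCount_eq_factorial_mul_det (N := m + 1) A
      fun a ha => ⟨hA a ha, by have := hm a ha; omega⟩
    rw [eq_div_iff (by positivity), mul_comm]
    exact_mod_cast h.symm
  have hinvn : Filter.Tendsto (fun n : ℕ => 1 / ((n : ℝ) - 1)) Filter.atTop (nhds 0) := by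
    simpa [one_div, sub_eq_add_neg, Pi.inv_def] using
      (Filter.tendsto_atTop_add_const_right _ (-1) tendsto_natCast_atTop_atTop).inv_tendsto_atTop
  have hbound := (hfix.add hinvn).const_mul (((m : ℝ) + 1) ^ 2)
  rw [add_zero, mul_zero] at hbound
  change Filter.Tendsto _ Filter.atTop (nhds ((kernelMatrix A).det : ℝ))
  rw [hdet, tendsto_iff_norm_sub_tendsto_zero]
  refine squeeze_zero' (Filter.Eventually.of_forall fun n => norm_nonneg _) ?_ hbound
  filter_upwards [Filter.eventually_gt_atTop (m + 1)] with n hn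
  exact abs_permProb_descents_sub_le hn (hpos n (by omega)) (hsum n (by omega))
    (hinv n (by omega)) fun a ha => ⟨hA a ha, hm a ha⟩
end
end

section
/- For n ≥ 1 let π_n : S_{n+1} → S_n be the projection defined by π_n(σ)(i) = σ(i) if σ(i) ≠ n+1 and π_n(σ)(i) = σ(n+1) if σ(i) = n+1, for i ∈ {1,…,n} (removal of n+1 from the cycle structure). Then: (a) for every σ ∈ S_{n+1}, #(π_n(σ)) = #(σ) − 1 if σ(n+1) = n+1 and #(π_n(σ)) = #(σ) otherwise; (b) if (p_n)_{n≥1} is a sequence of probability measures, p_n on S_n, such that each p_n is invariant under conjugation and p_n is the pushforward of p_{n+1} under π_n for every n ≥ 1, then E_{p_n}[#(σ)] = Σ_{i=1}^{n} p_i({σ ∈ S_i : σ(1)=1}) for every n ≥ 1. -/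
/-!
Let `e : Fin n ≃ {x // x ≠ n+1}` be the inclusion. The defining formula of `π_n` says exactly
that `σ = (n+1  σ(n+1)) * ext_e(π_n σ)`, where `ext_e` extends a permutation by fixing `n+1`.
Extending adds one fixed point, hence one cycle. If `σ(n+1) ≠ n+1`, multiplying `σ` by the
transposition `(n+1  σ(n+1))` splits `n+1` off its cycle as a new fixed point, so it also adds one
cycle; the two effects cancel and `#π_n(σ) = #σ`.

For (b), (a) reads `#σ = #π_n(σ) + 1[σ(n+1) = n+1]`. Taking expectations under `p_{n+1}`, the
pushforward property turns the first term into `E_{p_n}[#]`, and conjugation invariance (by the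
transposition `(1  n+1)`) turns the second into `p_{n+1}(σ(1) = 1)`; now induct on `n`.
-/

noncomputable section

/-- #(σ): number of cycles of `σ`, fixed points counted as cycles. -/
def numCycles {n : ℕ} (σ : Equiv.Perm (Fin n)) : ℕ :=
  σ.cycleType.card + (Finset.univ.filter fun x => σ x = x).card

open Finset

namespace Equiv.Perm

variable {α : Type*} [DecidableEq α] [Fintype α]

theorem card_parts_partition (σ : Perm α) :
    σ.partition.parts.card = σ.cycleType.card + (Fintype.card α - #σ.support) := by
  simp [parts_partition]

theorem IsCycle.card_cycleType_swap_mul_add_card_support {c : Perm α} (hc : c.IsCycle) {x : α}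
    (hx : c x ≠ x) :
    (swap x (c x) * c).cycleType.card + #c.support = #(swap x (c x) * c).support + 2 := by
  by_cases hcc : c (c x) = x
  · have hswap : c = swap x (c x) := hc.eq_swap_of_apply_apply_eq_self hx hcc
    rw [hswap, swap_apply_left, swap_mul_self, card_support_swap (Ne.symm hx)]
    simp
  · rw [(hc.swap_mul hx hcc).cycleType, support_swap_mul_eq c x hcc,
      Finset.sdiff_singleton_eq_erase, Finset.card_erase_of_mem (mem_support.2 hx)]
    have : 2 ≤ #c.support := hc.two_le_card_support
    rw [Multiset.card_singleton]
    omega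

theorem card_parts_partition_swap_mul {g : Perm α} {x : α} (hx : g x ≠ x) :
    (swap x (g x) * g).partition.parts.card = g.partition.parts.card + 1 := by
  set c := g.cycleOf x
  set d := g * c⁻¹
  have hc : c.IsCycle := isCycle_cycleOf g hx
  have hcx : c x = g x := cycleOf_apply_self g x
  have hdc : Disjoint d c := disjoint_mul_inv_of_mem_cycleFactorsFinset
    (cycleOf_mem_cycleFactorsFinset_iff.2 (mem_support.2 hx))
  have hg : g = c * d := by rw [← hdc.commute.eq, inv_mul_cancel_right]
  have hsd : Disjoint (swap x (c x) * c) d :=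
    hdc.symm.mono (fun y hy => (mem_support_swap_mul_imp_mem_support_ne hy).1) le_rfl
  have hsg : swap x (g x) * g = (swap x (c x) * c) * d := by rw [hcx, hg, mul_assoc]
  have key := hc.card_cycleType_swap_mul_add_card_support (x := x) (hcx ▸ hx)
  have hle := card_le_univ (swap x (c x) * c * d).support
  have hle' := card_le_univ (c * d).support
  rw [hsd.card_support_mul] at hle
  rw [hdc.symm.card_support_mul] at hle'
  rw [card_parts_partition, card_parts_partition, hsg, hg, hsd.cycleType_mul, hsd.card_support_mul,
    hdc.symm.cycleType_mul, hdc.symm.card_support_mul, Multiset.card_add, Multiset.card_add,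
    hc.cycleType, Multiset.card_singleton]
  omega

theorem card_parts_partition_extendDomain {β : Type*} [DecidableEq β] [Fintype β] {a : α}
    (e : β ≃ {x // x ≠ a}) (τ : Perm β) :
    (τ.extendDomain e).partition.parts.card = τ.partition.parts.card + 1 := by
  have hcard : Fintype.card α = Fintype.card β + 1 := by
    rw [Fintype.card_congr e, Fintype.card_subtype_compl, Fintype.card_subtype_eq,
      Nat.sub_add_cancel (Fintype.card_pos_iff.2 ⟨a⟩)]
  have hle := card_le_univ τ.support
  rw [card_parts_partition, card_parts_partition, cycleType_extendDomain,
    card_support_extend_domain, hcard]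
  omega

theorem card_parts_partition_swap_mul_extendDomain {β : Type*} [DecidableEq β] [Fintype β]
    {a : α} (e : β ≃ {x // x ≠ a}) (τ : Perm β) (b : α) :
    (swap a b * τ.extendDomain e).partition.parts.card =
      τ.partition.parts.card + if b = a then 1 else 0 := by
  have hfix : τ.extendDomain e a = a := extendDomain_apply_not_subtype τ e (not_not.2 rfl)
  split_ifs with hb
  · rw [hb, swap_self, ← one_def, one_mul, card_parts_partition_extendDomain]
  · have hσa : (swap a b * τ.extendDomain e) a = b := by simp [hfix]
    have key := card_parts_partition_swap_mul (g := swap a b * τ.extendDomain e) (x := a)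
      (by rwa [hσa])
    rw [hσa, ← mul_assoc, swap_mul_self, one_mul, card_parts_partition_extendDomain] at key
    omega

end Equiv.Perm

open Equiv Equiv.Perm

theorem numCycles_eq_card_parts_partition {n : ℕ} (σ : Perm (Fin n)) :
    numCycles σ = σ.partition.parts.card := by
  rw [numCycles, card_parts_partition, Fintype.card_fin, support, Finset.filter_not,
    Finset.card_sdiff_of_subset (Finset.filter_subset _ _), Finset.card_univ, Fintype.card_fin,
    Nat.sub_sub_self (Finset.card_le_univ _ |>.trans_eq (Fintype.card_fin n))]

/-- `τ = π_n(σ)`: `τ` is `σ` with `n+1` removed from its cycle. -/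
def IsEraseLast {n : ℕ} (σ : Perm (Fin (n + 1))) (τ : Perm (Fin n)) : Prop :=
  ∀ i, Fin.castSucc (τ i) =
    if σ (Fin.castSucc i) = Fin.last n then σ (Fin.last n) else σ (Fin.castSucc i)

theorem IsEraseLast.eq_swap_mul_extendDomain {n : ℕ} {σ : Perm (Fin (n + 1))} {τ : Perm (Fin n)}
    (hτ : IsEraseLast σ τ) :
    σ = swap (Fin.last n) (σ (Fin.last n)) * τ.extendDomain (finSuccAboveEquiv (Fin.last n)) := by
  have hext : ∀ i, τ.extendDomain (finSuccAboveEquiv (Fin.last n)) (Fin.castSucc i) =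
      Fin.castSucc (τ i) := fun i => by
    simpa [finSuccAboveEquiv_apply] using
      extendDomain_apply_image τ (finSuccAboveEquiv (Fin.last n)) i
  ext x : 1
  induction x using Fin.lastCases with
  | last => simp [extendDomain_apply_not_subtype]
  | cast i =>
    rw [mul_apply, hext, hτ]
    split_ifs with h
    · rw [swap_apply_right, h]
    · rw [swap_apply_of_ne_of_ne h (σ.injective.ne (Fin.castSucc_lt_last i).ne)]

theorem IsEraseLast.numCycles_eq {n : ℕ} {σ : Perm (Fin (n + 1))} {τ : Perm (Fin n)}
    (hτ : IsEraseLast σ τ) :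
    numCycles σ = numCycles τ + if σ (Fin.last n) = Fin.last n then 1 else 0 := by
  conv_lhs => rw [numCycles_eq_card_parts_partition, hτ.eq_swap_mul_extendDomain]
  rw [card_parts_partition_swap_mul_extendDomain, numCycles_eq_card_parts_partition]

theorem permProb_eq_sum_ite {n : ℕ} (p : Perm (Fin n) → ℝ) (P : Perm (Fin n) → Prop)
    [DecidablePred P] : permProb p P = ∑ σ, if P σ then p σ else 0 := by
  simp only [permProb, Set.indicator_apply, Set.mem_ofPred_eq]

theorem sum_mul_comp_eq_of_pushforward {α β : Type*} [Fintype α] [Fintype β] [DecidableEq β]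
    {q : α → ℝ} {r : β → ℝ} {π : α → β} (h : ∀ τ, r τ = ∑ σ, Set.indicator {σ | π σ = τ} q σ)
    (f : β → ℝ) : ∑ σ, q σ * f (π σ) = ∑ τ, r τ * f τ := by
  simp_rw [h, Finset.sum_mul, Set.indicator_apply, Set.mem_ofPred_eq, ite_mul, zero_mul]
  rw [Finset.sum_comm]
  simp

theorem permProb_apply_eq_self_eq_of_conj_invariant {n : ℕ} {p : Perm (Fin n) → ℝ}
    (hp : ∀ σ ρ, p (ρ⁻¹ * σ * ρ) = p σ) (a b : Fin n) :
    permProb p (fun σ => σ a = a) = permProb p (fun σ => σ b = b) := by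
  set ρ := swap a b
  rw [permProb_eq_sum_ite, permProb_eq_sum_ite]
  refine Fintype.sum_equiv (MulAut.conj ρ).toEquiv _ _ fun σ => ?_
  have hconj : (MulAut.conj ρ).toEquiv σ = ρ * σ * ρ⁻¹ := rfl
  have hfix : (ρ * σ * ρ⁻¹) b = b ↔ σ a = a := by
    simp [ρ, swap_inv, swap_apply_eq_iff]
  have hpσ : p (ρ * σ * ρ⁻¹) = p σ := by
    simpa [mul_assoc] using (hp (ρ * σ * ρ⁻¹) ρ).symm
  rw [hconj, hpσ]
  exact if_congr hfix.symm rfl rfl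

theorem sum_mul_numCycles_succ {n : ℕ} {π : Perm (Fin (n + 1)) → Perm (Fin n)}
    (hπ : ∀ σ, IsEraseLast σ (π σ))
    {q : Perm (Fin (n + 1)) → ℝ} {r : Perm (Fin n) → ℝ}
    (hpush : ∀ τ, r τ = ∑ σ, Set.indicator {σ | π σ = τ} q σ)
    (hconj : ∀ σ ρ, q (ρ⁻¹ * σ * ρ) = q σ) (a : Fin (n + 1)) :
    ∑ σ, q σ * (numCycles σ : ℝ) = ∑ τ, r τ * (numCycles τ : ℝ) + permProb q (fun σ => σ a = a) :=
  calc ∑ σ, q σ * (numCycles σ : ℝ)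
      = ∑ σ, (q σ * (numCycles (π σ) : ℝ) + if σ (Fin.last n) = Fin.last n then q σ else 0) := by
        refine Finset.sum_congr rfl fun σ _ => ?_
        rw [(hπ σ).numCycles_eq]
        split_ifs <;> push_cast <;> ring
    _ = ∑ τ, r τ * (numCycles τ : ℝ) + permProb q (fun σ => σ (Fin.last n) = Fin.last n) := by
        rw [Finset.sum_add_distrib,
          sum_mul_comp_eq_of_pushforward hpush (fun τ => (numCycles τ : ℝ)), permProb_eq_sum_ite]
    _ = ∑ τ, r τ * (numCycles τ : ℝ) + permProb q (fun σ => σ a = a) := by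
        rw [permProb_apply_eq_self_eq_of_conj_invariant hconj]

theorem stmt_19
    -- `proj n : S_{n+1} → S_n` is the projection removing `n+1` from the cycle structure:
    -- `π_n(σ)(i) = σ(i)` if `σ(i) ≠ n+1`, and `π_n(σ)(i) = σ(n+1)` if `σ(i) = n+1`.
    (proj : (n : ℕ) → Equiv.Perm (Fin (n + 1)) → Equiv.Perm (Fin n))
    (hproj : ∀ (n : ℕ) (σ : Equiv.Perm (Fin (n + 1))) (i : Fin n),
      Fin.castSucc (proj n σ i) =
        if σ (Fin.castSucc i) = Fin.last n then σ (Fin.last n) else σ (Fin.castSucc i)) :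
    -- (a)
    (∀ (n : ℕ) (σ : Equiv.Perm (Fin (n + 1))),
      (σ (Fin.last n) = Fin.last n → numCycles (proj n σ) = numCycles σ - 1) ∧
      (σ (Fin.last n) ≠ Fin.last n → numCycles (proj n σ) = numCycles σ)) ∧
    -- (b)
    (∀ p : (n : ℕ) → Equiv.Perm (Fin n) → ℝ,
      (∀ n, 1 ≤ n → ∀ σ, 0 ≤ p n σ) →
      (∀ n, 1 ≤ n → ∑ σ, p n σ = 1) →
      (∀ n, 1 ≤ n → ∀ σ ρ : Equiv.Perm (Fin n), p n (ρ⁻¹ * σ * ρ) = p n σ) →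
      -- `p n` is the pushforward of `p (n+1)` under `proj n`
      (∀ n, 1 ≤ n → ∀ τ : Equiv.Perm (Fin n),
        p n τ = ∑ σ : Equiv.Perm (Fin (n + 1)),
          Set.indicator {σ' | proj n σ' = τ} (p (n + 1)) σ) →
      ∀ n, 1 ≤ n →
        ∑ σ : Equiv.Perm (Fin n), p n σ * (numCycles σ : ℝ) =
          ∑ i ∈ Finset.Icc 1 n,
            permProb (p i) (fun σ : Equiv.Perm (Fin i) => ∀ h : 0 < i, σ ⟨0, h⟩ = ⟨0, h⟩)) := by
  refine ⟨fun n σ => ?_, fun p _ _ hconj hpush n hn => ?_⟩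
  · have h := IsEraseLast.numCycles_eq (hproj n σ)
    constructor <;> intro hfix <;> simp only [hfix, if_true, if_false] at h <;> omega
  induction n, hn using Nat.le_induction with
  | base => simp [permProb, numCycles, Fin.fin_one_eq_zero]
  | succ n hn ih =>
    rw [sum_mul_numCycles_succ (hproj n) (hpush n hn) (hconj (n + 1) (by omega)) ⟨0, n.succ_pos⟩,
      ih, Finset.sum_Icc_succ_top (by omega)]
    simp only [n.succ_pos, forall_true_left]
end
end
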